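/- arXiv:2511.16129 — 4 statements merged into one kernel-verified Lean document; each statement's English description precedes it below -/
import Mathlib

section
/- Let m > 1 and 2 ≤ N ≤ m, and assume (H1). Let u₁, u₂ be two radial solutions with b < α₁ < α₂, and on (0,α₁) set t(u) = r₁(u) − r₂(u), ω_i(u) = r_i(u)^{N−1}/(r_i'(u)|r_i'(u)|^{m−2}), and S(u) = ω₁(u)/ω₂(u). Then for u ∈ (b,α₁), S'(u) and t'(u) have the same sign (S'(u) > 0 iff t'(u) > 0, S'(u) = 0 iff t'(u) = 0, and S'(u) < 0 iff t'(u) < 0); and for u ∈ (0,b], if t'(u) ≥ 0 then S'(u) ≤ 0, and if t'(u) ≤ 0 then S'(u) ≥ 0. -/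
/-!
`ω` is the flux `r^{N-1}|u'|^{m-2}u'` of the radial equation written in the variable `u`, so the
equation says `ω' = r^{N-1} f(u) |r'| = -f(u) |r'|^m ω`. Hence `S = ω₁/ω₂ > 0` has logarithmic
derivative `f(u) (|r₂'|^m - |r₁'|^m)`, and as `x ↦ x^m` is increasing on `[0, ∞)`, the sign of `S'`
is that of `f(u) (r₁' - r₂')`; (H1) fixes the sign of `f(u)` on either side of `b`.
-/

open Filter Set MeasureTheory intervalIntegral

noncomputable section

/-- The half-open interval `[0, R)` inside `ℝ`, where `R : EReal` may be `∞`. -/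
def domR (R : EReal) : Set ℝ := {r : ℝ | 0 ≤ r ∧ (r : EReal) < R}

/-- The filter describing `r → R⁻` inside `ℝ` (it equals `atTop` when `R = ∞`). -/
def limR (R : EReal) : Filter ℝ := Filter.comap Real.toEReal (nhdsWithin R (Set.Iio R))

/-- Assumption (H1): `f` is continuous on `(0,∞)`, nonpositive on `(0,b]` and
positive on `(b,∞)`, with `b > 0`. -/
def H1cond (b : ℝ) (f : ℝ → ℝ) : Prop :=
  0 < b ∧ ContinuousOn f (Set.Ioi 0) ∧
    (∀ u : ℝ, 0 < u → u ≤ b → f u ≤ 0) ∧ (∀ u : ℝ, b < u → 0 < f u)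

/-- `u` (with derivative `u'`) is a radial solution on `[0, R)` of
`(r^{N-1} |u'|^{m-2} u')' = - r^{N-1} f(u)`, positive, `C¹` up to the origin,
with `u'(0) = 0` and `u, u' → 0` as `r → R`. -/
def IsRadialSolution (N : ℕ) (m : ℝ) (f : ℝ → ℝ) (R : EReal) (u u' : ℝ → ℝ) : Prop :=
  0 < R ∧
  (∀ r ∈ domR R, HasDerivWithinAt u (u' r) (domR R) r) ∧
  ContinuousOn u' (domR R) ∧
  (∀ r ∈ domR R, 0 < u r) ∧
  u' 0 = 0 ∧
  (∀ r : ℝ, 0 < r → (r : EReal) < R →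
    HasDerivAt (fun s : ℝ => s ^ (N - 1) * |u' s| ^ (m - 2) * u' s)
      (-(r ^ (N - 1) * f (u r))) r) ∧
  Filter.Tendsto u (limR R) (nhds 0) ∧
  Filter.Tendsto u' (limR R) (nhds 0)

/-- `rr` is the (strictly decreasing) inverse on `(0, α)` of a radial solution `u`,
with derivatives `rr'`, `rr''`, satisfying the transformed ODE
`(m-1) r'' = (N-1) r'²/r + f(u) |r'|^m r'`. -/
def IsInvSol (N : ℕ) (m α : ℝ) (f : ℝ → ℝ) (R : EReal) (u rr rr' rr'' : ℝ → ℝ) : Prop :=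
  (∀ v ∈ Set.Ioo 0 α,
    0 < rr v ∧ (rr v : EReal) < R ∧ u (rr v) = v ∧
    HasDerivAt rr (rr' v) v ∧ rr' v < 0 ∧ HasDerivAt rr' (rr'' v) v ∧
    (m - 1) * rr'' v = ((N : ℝ) - 1) * (rr' v) ^ 2 / rr v + f v * |rr' v| ^ m * rr' v) ∧
  (∀ x : ℝ, 0 < x → (x : EReal) < R → ∃ v ∈ Set.Ioo 0 α, rr v = x)

/-- The function `ω(u) = r(u)^{N-1} / (r'(u) |r'(u)|^{m-2})`. -/
def omegaF (N : ℕ) (m : ℝ) (rr rr' : ℝ → ℝ) (v : ℝ) : ℝ :=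
  rr v ^ (N - 1) / (rr' v * |rr' v| ^ (m - 2))

/-- The function `P(u) = a u ω(u) + r(u)^N ((m-1)/m · 1/|r'(u)|^m + (a/N) u f(u))`. -/
def PF (N : ℕ) (m a : ℝ) (f rr rr' : ℝ → ℝ) (v : ℝ) : ℝ :=
  a * v * omegaF N m rr rr' v +
    rr v ^ N * ((m - 1) / m * (1 / |rr' v| ^ m) + a / (N : ℝ) * v * f v)

lemma sign_rpow_sub_rpow {x y m : ℝ} (hx : 0 ≤ x) (hy : 0 ≤ y) (hm : 0 < m) :
    SignType.sign (x ^ m - y ^ m) = SignType.sign (x - y) := by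
  rcases lt_trichotomy x y with h | rfl | h
  · rw [sign_neg (sub_neg.2 h), sign_neg (sub_neg.2 (Real.rpow_lt_rpow hx h hm))]
  · simp only [sub_self]
  · rw [sign_pos (sub_pos.2 h), sign_pos (sub_pos.2 (Real.rpow_lt_rpow hy h hm))]

lemma HasDerivAt.div_of_eq_mul_self {g₁ g₂ : ℝ → ℝ} {c₁ c₂ x : ℝ}
    (h₁ : HasDerivAt g₁ (c₁ * g₁ x) x) (h₂ : HasDerivAt g₂ (c₂ * g₂ x) x) (hx : g₂ x ≠ 0) :
    HasDerivAt (fun y => g₁ y / g₂ y) ((c₁ - c₂) * (g₁ x / g₂ x)) x :=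
  (h₁.div h₂ hx).congr_deriv (by field_simp)

lemma omegaF_eq_of_neg (N : ℕ) (m : ℝ) {rr rr' : ℝ → ℝ} {v : ℝ} (hneg : rr' v < 0) :
    omegaF N m rr rr' v = -(rr v ^ (N - 1)) / (-rr' v) ^ (m - 1) := by
  have hA : 0 < -rr' v := neg_pos.2 hneg
  rw [omegaF, abs_of_neg hneg, show m - 2 = m - 1 - 1 by ring, Real.rpow_sub_one hA.ne']
  field_simp [hneg.ne]

lemma omegaF_neg (N : ℕ) (m : ℝ) {rr rr' : ℝ → ℝ} {v : ℝ} (hr : 0 < rr v) (hneg : rr' v < 0) :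
    omegaF N m rr rr' v < 0 := by
  rw [omegaF_eq_of_neg N m hneg, neg_div, neg_lt_zero]
  exact div_pos (pow_pos hr _) (Real.rpow_pos_of_pos (neg_pos.2 hneg) _)

lemma natCast_sub_one_mul_pow_sub_one_mul {N : ℕ} (hN : 1 ≤ N) (x : ℝ) :
    ((N - 1 : ℕ) : ℝ) * x ^ (N - 1 - 1) * x = ((N : ℝ) - 1) * x ^ (N - 1) := by
  obtain _ | _ | k := N
  · omega
  · simp
  · simp only [Nat.add_sub_cancel, Nat.cast_add, Nat.cast_one, pow_succ]
    ring

lemma hasDerivAt_omegaF {N : ℕ} {m : ℝ} {f rr rr' rr'' : ℝ → ℝ} {v : ℝ} (hN : 1 ≤ N)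
    (hr : 0 < rr v) (hd : HasDerivAt rr (rr' v) v) (hneg : rr' v < 0)
    (hd' : HasDerivAt rr' (rr'' v) v)
    (ode : (m - 1) * rr'' v = ((N : ℝ) - 1) * rr' v ^ 2 / rr v + f v * |rr' v| ^ m * rr' v) :
    HasDerivAt (omegaF N m rr rr') (-(f v * (-rr' v) ^ m) * omegaF N m rr rr' v) v := by
  have hA : 0 < -rr' v := neg_pos.2 hneg
  have hev : omegaF N m rr rr' =ᶠ[nhds v] fun w => -(rr w ^ (N - 1)) / (-rr' w) ^ (m - 1) := by
    filter_upwards [hd'.continuousAt.eventually_lt_const hneg] with w hw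
    exact omegaF_eq_of_neg N m hw
  have hden := hd'.neg.rpow_const (p := m - 1) (Or.inl hA.ne')
  have hnum := (hd.pow (N - 1)).neg
  refine ((hnum.div hden (Real.rpow_pos_of_pos hA _).ne').congr_of_eventuallyEq hev).congr_deriv ?_
  have hpow : ((N - 1 : ℕ) : ℝ) * rr v ^ (N - 1 - 1) = ((N : ℝ) - 1) * rr v ^ (N - 1) / rr v := by
    rw [eq_div_iff hr.ne', natCast_sub_one_mul_pow_sub_one_mul hN]
  have hAm1 : (-rr' v) ^ (m - 1) = (-rr' v) ^ (m - 1 - 1) * -rr' v := by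
    rw [← Real.rpow_add_one hA.ne', sub_add_cancel]
  have hAm : (-rr' v) ^ m = (-rr' v) ^ (m - 1 - 1) * -rr' v * -rr' v := by
    rw [← hAm1, ← Real.rpow_add_one hA.ne', sub_add_cancel]
  have hB := Real.rpow_pos_of_pos hA (m - 1 - 1)
  simp only [Pi.neg_apply, Pi.pow_apply]
  rw [omegaF_eq_of_neg N m hneg, hAm1, hAm, div_eq_iff (by positivity)]
  rw [abs_of_neg hneg, hAm] at ode
  linear_combination (norm := skip) (-(rr v ^ (N - 1)) * (-rr' v) ^ (m - 1 - 1)) * ode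
    + (-rr' v) ^ (m - 1 - 1) * rr' v ^ 2 * hpow
  field_simp
  ring

lemma sign_deriv_omegaF_div {N : ℕ} {m α₁ α₂ v : ℝ} {f : ℝ → ℝ} {R₁ R₂ : EReal}
    {u₁ u₂ r₁ r₁' r₁'' r₂ r₂' r₂'' : ℝ → ℝ} (hN : 1 ≤ N) (hm : 0 < m)
    (hi₁ : IsInvSol N m α₁ f R₁ u₁ r₁ r₁' r₁'') (hi₂ : IsInvSol N m α₂ f R₂ u₂ r₂ r₂' r₂'')
    (hv₁ : v ∈ Ioo 0 α₁) (hv₂ : v ∈ Ioo 0 α₂) :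
    SignType.sign (deriv (fun w => omegaF N m r₁ r₁' w / omegaF N m r₂ r₂' w) v) =
      SignType.sign (f v * (r₁' v - r₂' v)) := by
  obtain ⟨hr₁, -, -, hd₁, hneg₁, hd₁', ode₁⟩ := hi₁.1 v hv₁
  obtain ⟨hr₂, -, -, hd₂, hneg₂, hd₂', ode₂⟩ := hi₂.1 v hv₂
  have hω₁ := omegaF_neg N m hr₁ hneg₁
  have hω₂ := omegaF_neg N m hr₂ hneg₂
  have hS := (hasDerivAt_omegaF hN hr₁ hd₁ hneg₁ hd₁' ode₁).div_of_eq_mul_self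
    (hasDerivAt_omegaF hN hr₂ hd₂ hneg₂ hd₂' ode₂) hω₂.ne
  rw [hS.deriv, sign_mul, sign_pos (div_pos_of_neg_of_neg hω₁ hω₂), mul_one,
    show -(f v * (-r₁' v) ^ m) - -(f v * (-r₂' v) ^ m) = f v * ((-r₂' v) ^ m - (-r₁' v) ^ m) by ring,
    sign_mul, sign_mul, sign_rpow_sub_rpow (neg_pos.2 hneg₂).le (neg_pos.2 hneg₁).le hm,
    neg_sub_neg]

theorem stmt14_general (N : ℕ) (m b : ℝ) (f : ℝ → ℝ) (hm : 1 < m)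
    (hN2 : 2 ≤ N) (hf : H1cond b f)
    (R₁ R₂ : EReal) (u₁ u₂ r₁ r₁' r₁'' r₂ r₂' r₂'' : ℝ → ℝ)
    (hb : b < u₁ 0) (h12 : u₁ 0 < u₂ 0)
    (hi₁ : IsInvSol N m (u₁ 0) f R₁ u₁ r₁ r₁' r₁'')
    (hi₂ : IsInvSol N m (u₂ 0) f R₂ u₂ r₂ r₂' r₂'') :
    (∀ v : ℝ, b < v → v < u₁ 0 →
      (0 < deriv (fun w => omegaF N m r₁ r₁' w / omegaF N m r₂ r₂' w) v ↔
        0 < r₁' v - r₂' v) ∧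
      (deriv (fun w => omegaF N m r₁ r₁' w / omegaF N m r₂ r₂' w) v = 0 ↔
        r₁' v - r₂' v = 0) ∧
      (deriv (fun w => omegaF N m r₁ r₁' w / omegaF N m r₂ r₂' w) v < 0 ↔
        r₁' v - r₂' v < 0)) ∧
    (∀ v : ℝ, 0 < v → v ≤ b →
      (0 ≤ r₁' v - r₂' v →
        deriv (fun w => omegaF N m r₁ r₁' w / omegaF N m r₂ r₂' w) v ≤ 0) ∧
      (r₁' v - r₂' v ≤ 0 →
        0 ≤ deriv (fun w => omegaF N m r₁ r₁' w / omegaF N m r₂ r₂' w) v)) := by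
  obtain ⟨hb0, -, hf_nonpos, hf_pos⟩ := hf
  have hsign (v : ℝ) (hv₀ : 0 < v) (hv₁ : v < u₁ 0) :=
    sign_deriv_omegaF_div (by omega) (by linarith) hi₁ hi₂ ⟨hv₀, hv₁⟩ ⟨hv₀, hv₁.trans h12⟩
  refine ⟨fun v hbv hv => ?_, fun v hv₀ hvb => ?_⟩
  · have h := hsign v (hb0.trans hbv) hv
    rw [sign_mul, sign_pos (hf_pos v hbv), one_mul] at h
    exact ⟨by rw [← sign_eq_one_iff, h, sign_eq_one_iff],
      by rw [← sign_eq_zero_iff, h, sign_eq_zero_iff],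
      by rw [← sign_eq_neg_one_iff, h, sign_eq_neg_one_iff]⟩
  · have h := hsign v hv₀ (hvb.trans_lt hb)
    have hfv := hf_nonpos v hv₀ hvb
    refine ⟨fun ht => ?_, fun ht => ?_⟩
    · rw [← sign_nonpos_iff, h, sign_nonpos_iff]
      exact mul_nonpos_of_nonpos_of_nonneg hfv ht
    · rw [← sign_nonneg_iff, h, sign_nonneg_iff]
      exact mul_nonneg_of_nonpos_of_nonpos hfv ht

/-- `S' = (ω₁/ω₂)'` and `t' = r₁' - r₂'` have the same sign on `(b, α₁)`;
on `(0, b]`, `t' ≥ 0` implies `S' ≤ 0` and `t' ≤ 0` implies `S' ≥ 0`. -/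
theorem stmt14 (N : ℕ) (m b : ℝ) (f : ℝ → ℝ) (hm : 1 < m)
    (hN2 : 2 ≤ N) (hNm : (N : ℝ) ≤ m) (hf : H1cond b f)
    (R₁ R₂ : EReal) (u₁ u₁' u₂ u₂' r₁ r₁' r₁'' r₂ r₂' r₂'' : ℝ → ℝ)
    (h₁ : IsRadialSolution N m f R₁ u₁ u₁')
    (h₂ : IsRadialSolution N m f R₂ u₂ u₂')
    (hb : b < u₁ 0) (h12 : u₁ 0 < u₂ 0)
    (hi₁ : IsInvSol N m (u₁ 0) f R₁ u₁ r₁ r₁' r₁'')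
    (hi₂ : IsInvSol N m (u₂ 0) f R₂ u₂ r₂ r₂' r₂'') :
    (∀ v : ℝ, b < v → v < u₁ 0 →
      (0 < deriv (fun w => omegaF N m r₁ r₁' w / omegaF N m r₂ r₂' w) v ↔
        0 < r₁' v - r₂' v) ∧
      (deriv (fun w => omegaF N m r₁ r₁' w / omegaF N m r₂ r₂' w) v = 0 ↔
        r₁' v - r₂' v = 0) ∧
      (deriv (fun w => omegaF N m r₁ r₁' w / omegaF N m r₂ r₂' w) v < 0 ↔
        r₁' v - r₂' v < 0)) ∧
    (∀ v : ℝ, 0 < v → v ≤ b →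
      (0 ≤ r₁' v - r₂' v →
        deriv (fun w => omegaF N m r₁ r₁' w / omegaF N m r₂ r₂' w) v ≤ 0) ∧
      (r₁' v - r₂' v ≤ 0 →
        0 ≤ deriv (fun w => omegaF N m r₁ r₁' w / omegaF N m r₂ r₂' w) v)) :=
  stmt14_general N m b f hm hN2 hf R₁ R₂ u₁ u₂ r₁ r₁' r₁'' r₂ r₂' r₂'' hb h12 hi₁ hi₂

end
end

section
/- Let m > 1 and 2 ≤ N ≤ m, and assume (H1). Let u₁, u₂ be two radial solutions with b < α₁ < α₂, and on (0,α₁) set s(u) = r₁(u)/r₂(u) and T(u) = r₁(u)/r₁'(u) − r₂(u)/r₂'(u). Then for all u ∈ (0,α₁): T(u) = −(r₂(u)²/(r₁'(u) r₂'(u))) s'(u) and T'(u) = (1/(m−1)) f(u) ( r₁(u)|r₁'(u)|^{m−1} − r₂(u)|r₂'(u)|^{m−1} ); moreover T(u) → 0 as u → 0⁺. -/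
open Filter Set MeasureTheory intervalIntegral

noncomputable section

lemma keyAlg (N : ℕ) (m fv rv r'v r''v : ℝ) (hm : 1 < m) (h1 : 0 < rv) (h2 : r'v < 0)
    (hode : (m - 1) * r''v = ((N : ℝ) - 1) * r'v ^ 2 / rv + fv * |r'v| ^ m * r'v) :
    (r'v * r'v - rv * r''v) / r'v ^ 2 =
      1 - ((N:ℝ)-1)/(m-1) + 1/(m-1) * (fv * (rv * |r'v| ^ (m-1))) := by
  have hm1 : m - 1 ≠ 0 := by linarith
  have habs : |r'v| ^ m = |r'v| ^ (m-1) * (-r'v) := by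
    rw [show m = (m-1)+1 by ring, Real.rpow_add_one (abs_ne_zero.2 h2.ne)]
    rw [abs_of_neg h2]; ring_nf
  rw [habs] at hode
  have hr'' : r''v = (((N:ℝ)-1) * r'v^2 / rv + fv * (|r'v|^(m-1) * -r'v) * r'v)/(m-1) := by
    rw [← hode]; field_simp
  rw [hr'']
  field_simp [hm1, h1.ne', h2.ne]
  ring

lemma domR_mem_nhds {R : EReal} {x : ℝ} (hx : 0 < x) (hxR : (x : EReal) < R) :
    domR R ∈ nhds x := by
  induction R using EReal.rec with
  | bot => exact absurd hxR (by simp)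
  | coe c =>
      have hxc : x < c := by exact_mod_cast hxR
      refine Filter.mem_of_superset (Ioo_mem_nhds hx hxc) ?_
      intro y hy; exact ⟨hy.1.le, by exact_mod_cast hy.2⟩
  | top =>
      refine Filter.mem_of_superset (Ioi_mem_nhds hx) ?_
      intro y hy; exact ⟨le_of_lt hy, by simp⟩

lemma auxLim (N : ℕ) (m b α : ℝ) (f : ℝ → ℝ) (R : EReal) (u u' rr rr' rr'' : ℝ → ℝ)
    (hm : 1 < m) (hf : H1cond b f)
    (h : IsRadialSolution N m f R u u') (hb : b < α)
    (hi : IsInvSol N m α f R u rr rr' rr'') :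
    Tendsto (fun v => rr v / rr' v) (nhdsWithin 0 (Set.Ioi 0)) (nhds 0) := by
  have hα0 : 0 < α := hf.1.trans hb
  have hIooMem : Ioo (0:ℝ) α ∈ nhdsWithin 0 (Set.Ioi 0) := Ioo_mem_nhdsGT hα0
  -- u has full derivative at points of (0,R)
  have hud : ∀ x : ℝ, 0 < x → (x : EReal) < R → HasDerivAt u (u' x) x := fun x hx hxR =>
    (h.2.1 x ⟨hx.le, hxR⟩).hasDerivAt (domR_mem_nhds hx hxR)
  -- chain rule identity
  have hkey : ∀ v ∈ Ioo (0:ℝ) α, u' (rr v) * rr' v = 1 := by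
    intro v hv
    obtain ⟨hp, hR, hurr, hd, hd', hdd, _⟩ := hi.1 v hv
    have hcomp : HasDerivAt (fun w => u (rr w)) (u' (rr v) * rr' v) v :=
      (hud _ hp hR).comp v hd
    have heq : (fun w => w) =ᶠ[nhds v] (fun w => u (rr w)) := by
      filter_upwards [isOpen_Ioo.mem_nhds hv] with w hw
      exact ((hi.1 w hw).2.2.1).symm
    exact (hcomp.congr_of_eventuallyEq heq).unique (hasDerivAt_id v)
  have hratio : ∀ v ∈ Ioo (0:ℝ) α, rr v / rr' v = rr v * u' (rr v) := by
    intro v hv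
    have hk := hkey v hv
    have hne : rr' v ≠ 0 := ne_of_lt (hi.1 v hv).2.2.2.2.1
    rw [div_eq_iff hne, mul_assoc, hk, mul_one]
  -- strict antitonicity of rr
  have hanti : StrictAntiOn rr (Ioo (0:ℝ) α) := by
    apply strictAntiOn_of_deriv_neg (convex_Ioo 0 α)
    · exact fun v hv => ((hi.1 v hv).2.2.2.1).continuousAt.continuousWithinAt
    · intro x hx
      rw [interior_Ioo] at hx
      rw [((hi.1 x hx).2.2.2.1).deriv]
      exact (hi.1 x hx).2.2.2.2.1
  have hev : ∀ x : ℝ, 0 < x → (x : EReal) < R → ∀ᶠ v in nhdsWithin 0 (Set.Ioi 0), x < rr v := by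
    intro x hx hxR
    obtain ⟨v₀, hv₀, hrrv₀⟩ := hi.2 x hx hxR
    filter_upwards [Ioo_mem_nhdsGT hv₀.1] with v hv
    have : rr v₀ < rr v := hanti ⟨hv.1, hv.2.trans hv₀.2⟩ hv₀ hv.2
    rwa [hrrv₀] at this
  induction R using EReal.rec with
  | bot => exact absurd h.1 (by simp)
  | coe c =>
      have hc0 : (0:ℝ) < c := by exact_mod_cast h.1
      have hrrlt : ∀ v ∈ Ioo (0:ℝ) α, rr v < c := fun v hv => by exact_mod_cast (hi.1 v hv).2.1
      have htr : Tendsto rr (nhdsWithin 0 (Set.Ioi 0)) (nhds c) := by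
        refine tendsto_order.2 ⟨?_, ?_⟩
        · intro x hx
          rcases le_or_gt x 0 with hx0 | hx0
          · filter_upwards [hIooMem] with v hv; exact lt_of_le_of_lt hx0 ((hi.1 v hv).1)
          · exact hev x hx0 (by exact_mod_cast hx)
        · intro x hx
          filter_upwards [hIooMem] with v hv; exact (hrrlt v hv).trans hx
      have hcomap : Tendsto rr (nhdsWithin 0 (Set.Ioi 0)) (limR (c:ℝ)) := by
        rw [limR, tendsto_comap_iff, tendsto_nhdsWithin_iff]
        constructor
        · exact EReal.tendsto_coe.2 htr
        · filter_upwards [hIooMem] with v hv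
          simp only [Function.comp_apply, mem_Iio]
          exact_mod_cast hrrlt v hv
      have hu' : Tendsto (fun v => u' (rr v)) (nhdsWithin 0 (Set.Ioi 0)) (nhds 0) :=
        h.2.2.2.2.2.2.2.comp hcomap
      have hmul : Tendsto (fun v => rr v * u' (rr v)) (nhdsWithin 0 (Set.Ioi 0)) (nhds (c * 0)) :=
        htr.mul hu'
      rw [mul_zero] at hmul
      exact hmul.congr' (by filter_upwards [hIooMem] with v hv; exact (hratio v hv).symm)
  | top =>
      have hu'neg : ∀ x : ℝ, 0 < x → u' x < 0 := by
        intro x hx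
        obtain ⟨v, hv, hrr⟩ := hi.2 x hx (EReal.coe_lt_top x)
        have hk := hkey v hv
        have h' := (hi.1 v hv).2.2.2.2.1
        rw [hrr] at hk
        nlinarith [hk, h']
      have hbIoo : b ∈ Ioo (0:ℝ) α := ⟨hf.1, hb⟩
      set ρ := rr b with hρ
      have hρpos : 0 < ρ := (hi.1 b hbIoo).1
      have hub : ∀ x : ℝ, ρ ≤ x → 0 < u x ∧ u x ≤ b := by
        intro x hx
        have hx0 : 0 < x := lt_of_lt_of_le hρpos hx
        obtain ⟨v, hv, hrr⟩ := hi.2 x hx0 (EReal.coe_lt_top x)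
        have hux : u x = v := by rw [← hrr]; exact (hi.1 v hv).2.2.1
        refine ⟨by rw [hux]; exact hv.1, ?_⟩
        rw [hux]
        by_contra hbv
        push_neg at hbv
        have hlt := hanti hbIoo hv hbv
        rw [hrr] at hlt; linarith
      set g : ℝ → ℝ := fun s => s ^ (N - 1) * |u' s| ^ (m - 2) * u' s with hgdef
      have hgd : ∀ x : ℝ, 0 < x → HasDerivAt g (-(x ^ (N-1) * f (u x))) x := fun x hx =>
        h.2.2.2.2.2.1 x hx (EReal.coe_lt_top x)
      have hgmono : MonotoneOn g (Ici ρ) := by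
        apply monotoneOn_of_deriv_nonneg (convex_Ici ρ)
        · exact fun x hx => (hgd x (lt_of_lt_of_le hρpos hx)).continuousAt.continuousWithinAt
        · intro x hx
          rw [interior_Ici] at hx
          exact ((hgd x (hρpos.trans hx)).differentiableAt).differentiableWithinAt
        · intro x hx
          rw [interior_Ici] at hx
          have hx0 : 0 < x := hρpos.trans hx
          rw [(hgd x hx0).deriv]
          have hu0 := hub x hx.le
          have hfle : f (u x) ≤ 0 := hf.2.2.1 _ hu0.1 hu0.2
          have hxp : (0:ℝ) ≤ x ^ (N-1) := pow_nonneg hx0.le _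
          nlinarith
      have hgeq : ∀ x : ℝ, 0 < x → g x = -(x ^ (N-1) * |u' x| ^ (m-1)) := by
        intro x hx
        have hne : u' x < 0 := hu'neg x hx
        have habs : |u' x| ^ (m - 1) = |u' x| ^ (m-2) * |u' x| := by
          rw [show m - 1 = (m-2) + 1 by ring, Real.rpow_add_one (abs_ne_zero.2 hne.ne)]
        simp only [hgdef]
        rw [habs]
        nth_rewrite 3 [abs_of_neg hne]
        ring
      have habs' : ∀ s r : ℝ, ρ ≤ s → s ≤ r → |u' r| ≤ |u' s| := by
        intro s r hs hsr
        have hs0 : 0 < s := hρpos.trans_le hs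
        have hr0 : 0 < r := hs0.trans_le hsr
        have hgs := hgmono (mem_Ici.2 hs) (mem_Ici.2 (hs.trans hsr)) hsr
        rw [hgeq s hs0, hgeq r hr0] at hgs
        have h1 : r ^ (N-1) * |u' r| ^ (m-1) ≤ s ^ (N-1) * |u' s| ^ (m-1) := by linarith
        have h2 : s ^ (N-1) ≤ r ^ (N-1) := pow_le_pow_left₀ hs0.le hsr _
        have h3 : s ^ (N-1) * |u' s| ^ (m-1) ≤ r ^ (N-1) * |u' s| ^ (m-1) :=
          mul_le_mul_of_nonneg_right h2 (Real.rpow_nonneg (abs_nonneg _) _)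
        have h4 : |u' r| ^ (m-1) ≤ |u' s| ^ (m-1) :=
          le_of_mul_le_mul_left (by linarith) (pow_pos hr0 _)
        by_contra hcon
        push_neg at hcon
        exact absurd (Real.rpow_lt_rpow (abs_nonneg _) hcon (by linarith)) (not_lt.2 h4)
      have hbound : ∀ r : ℝ, 2 * ρ ≤ r → r * |u' r| ≤ 2 * u (r/2) := by
        intro r hr
        have hρr : ρ ≤ r / 2 := by linarith
        have h20 : 0 < r / 2 := hρpos.trans_le hρr
        have hhalf : r / 2 ≤ r := by linarith
        have hsub : uIcc (r/2) r ⊆ domR ⊤ := by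
          intro x hx
          rw [uIcc_of_le hhalf] at hx
          exact ⟨(h20.trans_le hx.1).le, EReal.coe_lt_top x⟩
        have hint : IntervalIntegrable u' volume (r/2) r :=
          (h.2.2.1.mono hsub).intervalIntegrable
        have hftc : ∫ y in (r/2)..r, u' y = u r - u (r/2) := by
          apply intervalIntegral.integral_eq_sub_of_hasDerivAt
          · intro x hx
            rw [uIcc_of_le hhalf] at hx
            exact hud x (h20.trans_le hx.1) (EReal.coe_lt_top x)
          · exact hint
        have hmono : ∫ y in (r/2)..r, u' y ≤ ∫ _y in (r/2)..r, (-|u' r|) := by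
          apply intervalIntegral.integral_mono_on hhalf hint intervalIntegrable_const
          intro x hx
          have hx0 : 0 < x := h20.trans_le hx.1
          have hle : |u' r| ≤ |u' x| := habs' x r (hρr.trans hx.1) hx.2
          have hxneg : u' x < 0 := hu'neg x hx0
          rw [abs_of_neg hxneg] at hle
          linarith
        rw [intervalIntegral.integral_const, hftc] at hmono
        have hur : 0 < u r := h.2.2.2.1 r ⟨(h20.trans_le hhalf).le, EReal.coe_lt_top r⟩
        have hfin : u r - u (r/2) ≤ (r - r/2) * (-|u' r|) := by
          simpa [smul_eq_mul] using hmono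
        nlinarith [abs_nonneg (u' r)]
      have hatTop : Tendsto rr (nhdsWithin 0 (Set.Ioi 0)) atTop := by
        refine tendsto_atTop.2 fun M => ?_
        have h1 : (0:ℝ) < max M 1 := lt_of_lt_of_le one_pos (le_max_right M 1)
        filter_upwards [hev (max M 1) h1 (EReal.coe_lt_top _)] with v hv
        exact le_of_lt (lt_of_le_of_lt (le_max_left M 1) hv)
      have hhalfTop : Tendsto (fun v => rr v / 2) (nhdsWithin 0 (Set.Ioi 0)) atTop :=
        Tendsto.atTop_div_const two_pos hatTop
      have hlimtop : Tendsto (fun v => rr v / 2) (nhdsWithin 0 (Set.Ioi 0)) (limR ⊤) := by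
        rw [limR, tendsto_comap_iff, tendsto_nhdsWithin_iff]
        constructor
        · rw [EReal.tendsto_nhds_top_iff_real]
          intro x
          filter_upwards [hhalfTop.eventually_gt_atTop x] with v hv
          simp only [Function.comp_apply]
          exact_mod_cast hv
        · filter_upwards with v; exact EReal.coe_lt_top _
      have hutend : Tendsto (fun v => 2 * u (rr v / 2)) (nhdsWithin 0 (Set.Ioi 0)) (nhds 0) := by
        have h0 := (h.2.2.2.2.2.2.1.comp hlimtop).const_mul (2:ℝ)
        simpa using h0
      have hneg : Tendsto (fun v => -(2 * u (rr v / 2))) (nhdsWithin 0 (Set.Ioi 0)) (nhds 0) := by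
        simpa using hutend.neg
      refine tendsto_of_tendsto_of_tendsto_of_le_of_le' hneg hutend ?_ ?_
      · filter_upwards [hIooMem, hatTop.eventually_ge_atTop (2*ρ)] with v hv hv2
        have h1 := hbound (rr v) hv2
        rw [hratio v hv]
        have h2 : |rr v * u' (rr v)| ≤ 2 * u (rr v / 2) := by
          rw [abs_mul, abs_of_pos (hi.1 v hv).1]; exact h1
        have h3 := neg_abs_le (rr v * u' (rr v))
        linarith
      · filter_upwards [hIooMem, hatTop.eventually_ge_atTop (2*ρ)] with v hv hv2
        have h1 := hbound (rr v) hv2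
        rw [hratio v hv]
        have h2 : |rr v * u' (rr v)| ≤ 2 * u (rr v / 2) := by
          rw [abs_mul, abs_of_pos (hi.1 v hv).1]; exact h1
        have h3 := le_abs_self (rr v * u' (rr v))
        linarith

/-- with `s = r₁/r₂` and `T = r₁/r₁' - r₂/r₂'` on `(0, α₁)`:
`T(u) = -(r₂²/(r₁' r₂')) s'(u)`,
`T'(u) = (1/(m-1)) f(u) (r₁|r₁'|^{m-1} - r₂|r₂'|^{m-1})`, and `T(u) → 0` as `u → 0⁺`. -/
theorem stmt15 (N : ℕ) (m b : ℝ) (f : ℝ → ℝ) (hm : 1 < m)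
    (hN2 : 2 ≤ N) (hNm : (N : ℝ) ≤ m) (hf : H1cond b f)
    (R₁ R₂ : EReal) (u₁ u₁' u₂ u₂' r₁ r₁' r₁'' r₂ r₂' r₂'' : ℝ → ℝ)
    (h₁ : IsRadialSolution N m f R₁ u₁ u₁')
    (h₂ : IsRadialSolution N m f R₂ u₂ u₂')
    (hb : b < u₁ 0) (h12 : u₁ 0 < u₂ 0)
    (hi₁ : IsInvSol N m (u₁ 0) f R₁ u₁ r₁ r₁' r₁'')
    (hi₂ : IsInvSol N m (u₂ 0) f R₂ u₂ r₂ r₂' r₂'') :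
    (∀ v ∈ Set.Ioo (0 : ℝ) (u₁ 0),
      r₁ v / r₁' v - r₂ v / r₂' v =
        -((r₂ v) ^ 2 / (r₁' v * r₂' v)) * deriv (fun w => r₁ w / r₂ w) v ∧
      HasDerivAt (fun w => r₁ w / r₁' w - r₂ w / r₂' w)
        (1 / (m - 1) * f v * (r₁ v * |r₁' v| ^ (m - 1) - r₂ v * |r₂' v| ^ (m - 1))) v) ∧
    Filter.Tendsto (fun w => r₁ w / r₁' w - r₂ w / r₂' w)
      (nhdsWithin 0 (Set.Ioi 0)) (nhds 0) := by
  refine ⟨?_, ?_⟩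
  · intro v hv
    obtain ⟨hr₁p, hr₁R, hu₁r, hd₁, hd₁neg, hdd₁, hode₁⟩ := hi₁.1 v hv
    have hv₂ : v ∈ Set.Ioo (0:ℝ) (u₂ 0) := ⟨hv.1, hv.2.trans h12⟩
    obtain ⟨hr₂p, hr₂R, hu₂r, hd₂, hd₂neg, hdd₂, hode₂⟩ := hi₂.1 v hv₂
    have h1ne : r₁' v ≠ 0 := ne_of_lt hd₁neg
    have h2ne : r₂' v ≠ 0 := ne_of_lt hd₂neg
    have h2pne : r₂ v ≠ 0 := ne_of_gt hr₂p
    constructor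
    · have hds : HasDerivAt (fun w => r₁ w / r₂ w)
          ((r₁' v * r₂ v - r₁ v * r₂' v) / (r₂ v) ^ 2) v := hd₁.div hd₂ h2pne
      rw [hds.deriv]
      field_simp
      ring
    · have hD : HasDerivAt (fun w => r₁ w / r₁' w - r₂ w / r₂' w)
          ((r₁' v * r₁' v - r₁ v * r₁'' v) / (r₁' v) ^ 2 -
            (r₂' v * r₂' v - r₂ v * r₂'' v) / (r₂' v) ^ 2) v :=
        (hd₁.div hdd₁ h1ne).sub (hd₂.div hdd₂ h2ne)
      convert hD using 1
      rw [keyAlg N m (f v) _ _ _ hm hr₁p hd₁neg hode₁,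
        keyAlg N m (f v) _ _ _ hm hr₂p hd₂neg hode₂]
      ring
  · have l₁ := auxLim N m b (u₁ 0) f R₁ u₁ u₁' r₁ r₁' r₁'' hm hf h₁ hb hi₁
    have l₂ := auxLim N m b (u₂ 0) f R₂ u₂ u₂' r₂ r₂' r₂'' hm hf h₂ (hb.trans h12) hi₂
    simpa using l₁.sub l₂

end
end

section
/- Let m > 1 and 2 ≤ N ≤ m, and assume (H1). Let u₁, u₂ be two radial solutions with b < α₁ < α₂, and set s(u) = r₁(u)/r₂(u) on (0,α₁). If u ∈ (b,α₁) satisfies r₁'(u) < r₂'(u) < 0 and s'(u) = 0, then s''(u) < 0. (Hence any critical point of s lying in an interval of (b,α₁) on which t' = r₁' − r₂' < 0 is a strict local maximum.) -/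
open Filter Set MeasureTheory intervalIntegral

noncomputable section

/-- with `s = r₁/r₂`, if `v ∈ (b, α₁)` satisfies `r₁'(v) < r₂'(v) < 0` and
`s'(v) = 0`, then `s''(v) < 0` (any such critical point is a strict local maximum). -/
theorem stmt18 (N : ℕ) (m b : ℝ) (f : ℝ → ℝ) (hm : 1 < m)
    (hN2 : 2 ≤ N) (hNm : (N : ℝ) ≤ m) (hf : H1cond b f)
    (R₁ R₂ : EReal) (u₁ u₁' u₂ u₂' r₁ r₁' r₁'' r₂ r₂' r₂'' : ℝ → ℝ)
    (h₁ : IsRadialSolution N m f R₁ u₁ u₁')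
    (h₂ : IsRadialSolution N m f R₂ u₂ u₂')
    (hb : b < u₁ 0) (h12 : u₁ 0 < u₂ 0)
    (hi₁ : IsInvSol N m (u₁ 0) f R₁ u₁ r₁ r₁' r₁'')
    (hi₂ : IsInvSol N m (u₂ 0) f R₂ u₂ r₂ r₂' r₂'') :
    ∀ v : ℝ, b < v → v < u₁ 0 → r₁' v < r₂' v → r₂' v < 0 →
      deriv (fun w => r₁ w / r₂ w) v = 0 →
      deriv (deriv (fun w => r₁ w / r₂ w)) v < 0 := by
  intro v hbv hvA hd12 hd20 hcrit
  have hv0 : 0 < v := hf.1.trans hbv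
  have hv1 : v ∈ Set.Ioo 0 (u₁ 0) := ⟨hv0, hvA⟩
  have hv2 : v ∈ Set.Ioo 0 (u₂ 0) := ⟨hv0, hvA.trans h12⟩
  obtain ⟨hr1pos, -, -, hd1, hd1neg, hdd1, ode1⟩ := hi₁.1 v hv1
  obtain ⟨hr2pos, -, -, hd2, hd2neg, hdd2, ode2⟩ := hi₂.1 v hv2
  have hr1ne : r₁ v ≠ 0 := ne_of_gt hr1pos
  have hr2ne : r₂ v ≠ 0 := ne_of_gt hr2pos
  -- derivative of the quotient on the open interval
  have hs : ∀ w ∈ Set.Ioo 0 (u₁ 0), HasDerivAt (fun w => r₁ w / r₂ w)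
      ((r₁' w * r₂ w - r₁ w * r₂' w) / (r₂ w) ^ 2) w := by
    intro w hw
    have hw2 : w ∈ Set.Ioo 0 (u₂ 0) := ⟨hw.1, hw.2.trans h12⟩
    obtain ⟨-, -, -, hw1d, -, -, -⟩ := hi₁.1 w hw
    obtain ⟨hw2pos, -, -, hw2d, -, -, -⟩ := hi₂.1 w hw2
    exact hw1d.div hw2d (ne_of_gt hw2pos)
  have heq : deriv (fun w => r₁ w / r₂ w) =ᶠ[nhds v]
      (fun w => (r₁' w * r₂ w - r₁ w * r₂' w) / (r₂ w) ^ 2) := by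
    filter_upwards [Ioo_mem_nhds hv1.1 hv1.2] with w hw using (hs w hw).deriv
  -- the numerator vanishes at the critical point
  have hnum0 : r₁' v * r₂ v - r₁ v * r₂' v = 0 := by
    have h0 : (r₁' v * r₂ v - r₁ v * r₂' v) / (r₂ v) ^ 2 = 0 := by
      rw [← (hs v hv1).deriv]; exact hcrit
    rcases div_eq_zero_iff.mp h0 with h | h
    · exact h
    · exact absurd h (pow_ne_zero 2 hr2ne)
  -- second derivative computation
  have hnumd : HasDerivAt (fun w => r₁' w * r₂ w - r₁ w * r₂' w)
      (r₁'' v * r₂ v + r₁' v * r₂' v - (r₁' v * r₂' v + r₁ v * r₂'' v)) v :=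
    (hdd1.mul hd2).sub (hd1.mul hdd2)
  have hdend : HasDerivAt (fun w => (r₂ w) ^ 2) ((2 : ℕ) * r₂ v ^ (2 - 1) * r₂' v) v :=
    hd2.pow 2
  have hg : HasDerivAt (fun w => (r₁' w * r₂ w - r₁ w * r₂' w) / (r₂ w) ^ 2)
      (((r₁'' v * r₂ v + r₁' v * r₂' v - (r₁' v * r₂' v + r₁ v * r₂'' v)) * (r₂ v) ^ 2 -
        (r₁' v * r₂ v - r₁ v * r₂' v) * ((2 : ℕ) * r₂ v ^ (2 - 1) * r₂' v)) /
        ((r₂ v) ^ 2) ^ 2) v :=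
    hnumd.div hdend (pow_ne_zero 2 hr2ne)
  rw [heq.deriv_eq, hg.deriv]
  -- sign analysis
  have hm1 : (0 : ℝ) < m - 1 := by linarith
  have habs : |r₂' v| < |r₁' v| := by rw [abs_of_neg hd2neg, abs_of_neg hd1neg]; linarith
  have hPQ : |r₂' v| ^ m < |r₁' v| ^ m :=
    Real.rpow_lt_rpow (abs_nonneg _) habs (by linarith)
  have hfv : 0 < f v := hf.2.2.2 v hbv
  have e1' : (m - 1) * r₁'' v * r₁ v =
      ((N : ℝ) - 1) * (r₁' v) ^ 2 + f v * |r₁' v| ^ m * r₁' v * r₁ v := by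
    field_simp at ode1; linarith [ode1]
  have e2' : (m - 1) * r₂'' v * r₂ v =
      ((N : ℝ) - 1) * (r₂' v) ^ 2 + f v * |r₂' v| ^ m * r₂' v * r₂ v := by
    field_simp at ode2; linarith [ode2]
  have hmain : (m - 1) * (r₁'' v * r₂ v - r₁ v * r₂'' v) * (r₁ v * r₂ v) =
      f v * ((|r₁' v| ^ m - |r₂' v| ^ m) * (r₁' v * r₂ v)) * (r₁ v * r₂ v) := by
    linear_combination (r₂ v) ^ 2 * e1' - (r₁ v) ^ 2 * e2' +
      ((((N : ℝ) - 1) * (r₁' v * r₂ v + r₂' v * r₁ v)) +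
        f v * |r₂' v| ^ m * r₁ v * r₂ v) * hnum0
  have hrhs : f v * ((|r₁' v| ^ m - |r₂' v| ^ m) * (r₁' v * r₂ v)) * (r₁ v * r₂ v) < 0 := by
    have h1 : r₁' v * r₂ v < 0 := mul_neg_of_neg_of_pos hd1neg hr2pos
    have h2 : (|r₁' v| ^ m - |r₂' v| ^ m) * (r₁' v * r₂ v) < 0 :=
      mul_neg_of_pos_of_neg (by linarith) h1
    exact mul_neg_of_neg_of_pos (mul_neg_of_pos_of_neg hfv h2) (mul_pos hr1pos hr2pos)
  have hA : r₁'' v * r₂ v - r₁ v * r₂'' v < 0 := by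
    by_contra h
    push_neg at h
    nlinarith [mul_nonneg (mul_nonneg hm1.le h) (mul_pos hr1pos hr2pos).le]
  apply div_neg_of_neg_of_pos
  · have : (r₁'' v * r₂ v + r₁' v * r₂' v - (r₁' v * r₂' v + r₁ v * r₂'' v)) * (r₂ v) ^ 2 -
        (r₁' v * r₂ v - r₁ v * r₂' v) * ((2 : ℕ) * r₂ v ^ (2 - 1) * r₂' v) =
        (r₁'' v * r₂ v - r₁ v * r₂'' v) * (r₂ v) ^ 2 := by
      rw [hnum0]; ring
    rw [this]
    exact mul_neg_of_neg_of_pos hA (pow_pos hr2pos 2)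
  · positivity

end
end

section
/- Let m > 1 and 2 ≤ N ≤ m, and assume (H1). Let u₁, u₂ be two radial solutions with b < α₁ < α₂; on (0,α₁) set t(u) = r₁(u) − r₂(u), ω_i(u) = r_i(u)^{N−1}/(r_i'(u)|r_i'(u)|^{m−2}), S(u) = ω₁(u)/ω₂(u), and for a ∈ ℝ set P_i(u) = a u ω_i(u) + r_i(u)^N ( (m−1)/m · 1/|r_i'(u)|^m + (a/N) u f(u) ). If u_c ∈ (b,α₁) satisfies t(u_c) > 0 and t'(u_c) = 0, then for every a > 0: P₁(u_c) − S(u_c) P₂(u_c) > 0. -/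
open Filter Set MeasureTheory intervalIntegral

noncomputable section

/-!
At a critical point of `t = r₁ - r₂` the two inverses have the same slope, so `ω₁` and `ω₂`
differ only through the factor `r^{N-1}`. Hence the terms `a u ω_i` cancel in `P₁ - S P₂`,
which reduces to `r₁^{N-1} (r₁ - r₂)` times the common bracket
`(m-1)/m · |r'|^{-m} + (a/N) u f(u)`; all three factors are positive when `u > b`.
-/

theorem mul_abs_rpow_sub_two_ne_zero {p : ℝ} (m : ℝ) (hp : p ≠ 0) : p * |p| ^ (m - 2) ≠ 0 :=
  mul_ne_zero hp (Real.rpow_pos_of_pos (abs_pos.mpr hp) _).ne'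

theorem omegaF_div_omegaF_of_deriv_eq {N : ℕ} {m v : ℝ} {r₁ r₁' r₂ r₂' : ℝ → ℝ}
    (hp : r₁' v = r₂' v) (hp₀ : r₁' v ≠ 0) :
    omegaF N m r₁ r₁' v / omegaF N m r₂ r₂' v = r₁ v ^ (N - 1) / r₂ v ^ (N - 1) := by
  rw [omegaF, omegaF, ← hp, div_div_div_cancel_right₀ (mul_abs_rpow_sub_two_ne_zero m hp₀)]

theorem PF_sub_omegaF_div_mul_PF_of_deriv_eq {N : ℕ} (hN : 1 ≤ N) {m a v : ℝ}
    {f r₁ r₁' r₂ r₂' : ℝ → ℝ} (hp : r₁' v = r₂' v) (hp₀ : r₁' v ≠ 0) (hr₂ : r₂ v ≠ 0) :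
    PF N m a f r₁ r₁' v - (omegaF N m r₁ r₁' v / omegaF N m r₂ r₂' v) * PF N m a f r₂ r₂' v =
      r₁ v ^ (N - 1) * (r₁ v - r₂ v) * ((m - 1) / m * (1 / |r₁' v| ^ m) + a / N * v * f v) := by
  have hD := mul_abs_rpow_sub_two_ne_zero m hp₀
  rw [omegaF_div_omegaF_of_deriv_eq hp hp₀]
  simp only [PF, omegaF, ← hp]
  generalize r₁' v * |r₁' v| ^ (m - 2) = D at hD ⊢
  generalize (m - 1) / m * (1 / |r₁' v| ^ m) = c
  obtain ⟨k, rfl⟩ := Nat.exists_eq_add_of_le' hN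
  have : r₂ v ^ k ≠ 0 := pow_ne_zero _ hr₂
  simp only [Nat.add_sub_cancel]
  field_simp
  ring

theorem stmt19_general (N : ℕ) (m b : ℝ) (f : ℝ → ℝ) (hm : 1 < m)
    (hN2 : 2 ≤ N) (hf : H1cond b f)
    (R₁ R₂ : EReal) (u₁ u₂ r₁ r₁' r₁'' r₂ r₂' r₂'' : ℝ → ℝ)
    (h12 : u₁ 0 < u₂ 0)
    (hi₁ : IsInvSol N m (u₁ 0) f R₁ u₁ r₁ r₁' r₁'')
    (hi₂ : IsInvSol N m (u₂ 0) f R₂ u₂ r₂ r₂' r₂'')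
    (uc : ℝ) (huc1 : b < uc) (huc2 : uc < u₁ 0)
    (ht : 0 < r₁ uc - r₂ uc) (ht' : r₁' uc - r₂' uc = 0) :
    ∀ a : ℝ, 0 < a →
      0 < PF N m a f r₁ r₁' uc -
        (omegaF N m r₁ r₁' uc / omegaF N m r₂ r₂' uc) * PF N m a f r₂ r₂' uc := by
  intro a ha
  obtain ⟨hb, -, -, hf_pos⟩ := hf
  have huc : 0 < uc := hb.trans huc1
  obtain ⟨hr₁, -, -, -, hr₁', -, -⟩ := hi₁.1 uc ⟨huc, huc2⟩
  obtain ⟨hr₂, -, -, -, -, -, -⟩ := hi₂.1 uc ⟨huc, huc2.trans h12⟩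
  rw [PF_sub_omegaF_div_mul_PF_of_deriv_eq (by omega) (sub_eq_zero.mp ht') hr₁'.ne hr₂.ne']
  have hbracket : 0 < (m - 1) / m * (1 / |r₁' uc| ^ m) + a / N * uc * f uc := by
    have := hf_pos uc huc1
    have := sub_pos.2 hm
    have := abs_pos.2 hr₁'.ne
    have : (0 : ℝ) < N := by exact_mod_cast (by omega : 0 < N)
    positivity
  exact mul_pos (mul_pos (pow_pos hr₁ _) ht) hbracket

/-- if `u_c ∈ (b, α₁)` satisfies `t(u_c) > 0` and `t'(u_c) = 0`, then for
every `a > 0`, `P₁(u_c) - S(u_c) P₂(u_c) > 0`. -/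
theorem stmt19 (N : ℕ) (m b : ℝ) (f : ℝ → ℝ) (hm : 1 < m)
    (hN2 : 2 ≤ N) (hNm : (N : ℝ) ≤ m) (hf : H1cond b f)
    (R₁ R₂ : EReal) (u₁ u₁' u₂ u₂' r₁ r₁' r₁'' r₂ r₂' r₂'' : ℝ → ℝ)
    (h₁ : IsRadialSolution N m f R₁ u₁ u₁')
    (h₂ : IsRadialSolution N m f R₂ u₂ u₂')
    (hb : b < u₁ 0) (h12 : u₁ 0 < u₂ 0)
    (hi₁ : IsInvSol N m (u₁ 0) f R₁ u₁ r₁ r₁' r₁'')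
    (hi₂ : IsInvSol N m (u₂ 0) f R₂ u₂ r₂ r₂' r₂'')
    (uc : ℝ) (huc1 : b < uc) (huc2 : uc < u₁ 0)
    (ht : 0 < r₁ uc - r₂ uc) (ht' : r₁' uc - r₂' uc = 0) :
    ∀ a : ℝ, 0 < a →
      0 < PF N m a f r₁ r₁' uc -
        (omegaF N m r₁ r₁' uc / omegaF N m r₂ r₂' uc) * PF N m a f r₂ r₂' uc :=
  stmt19_general N m b f hm hN2 hf R₁ R₂ u₁ u₂ r₁ r₁' r₁'' r₂ r₂' r₂'' h12 hi₁ hi₂ uc huc1 huc2 ht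
    ht'
end
end
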